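/- Let K ≥ 2, let z ∈ ℝ^K have a strict maximum at index M, and let p̂ ∈ (1/K, 1). Then there exists a unique temperature T > 0 satisfying exp(z_M/T) / Σ_{j=1}^K exp(z_j/T) = p̂; that is, the confidence equation implicitly defines a temperature function T = β(z) of the logits. -/

import Mathlib

open Real Finset Filter Topology

/-!
Dividing numerator and denominator by `exp (z M / T)`, the confidence is `1 / g T` with
`g T = ∑ j, exp ((z j - z M) / T)`. Every exponent `(z j - z M) / T` is `≤ 0` and increases with
`T`, strictly when `j ≠ M`, so `g` is continuous and strictly increasing on `(0, ∞)`. As `T → 0⁺`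
only the term `j = M` survives and `g T → 1`; as `T → ∞` every term tends to `1` and `g T → K`.
Hence `g` takes every value in `(1, K)`, in particular `1 / p̂`, exactly once.
-/

lemma monotoneOn_exp_div_of_nonpos {a : ℝ} (ha : a ≤ 0) :
    MonotoneOn (fun T => exp (a / T)) (Set.Ioi 0) := fun _ hs _ _ hst =>
  exp_le_exp.2 <| mul_le_mul_of_nonpos_left (inv_anti₀ hs hst) ha

lemma strictMonoOn_exp_div_of_neg {a : ℝ} (ha : a < 0) :
    StrictMonoOn (fun T => exp (a / T)) (Set.Ioi 0) := fun _ hs _ _ hst =>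
  exp_lt_exp.2 <| mul_lt_mul_of_neg_left (inv_strictAnti₀ hs hst) ha

lemma tendsto_exp_div_nhdsGT_zero_of_neg {a : ℝ} (ha : a < 0) :
    Tendsto (fun T => exp (a / T)) (𝓝[>] 0) (𝓝 0) :=
  tendsto_exp_atBot.comp <| (tendsto_inv_nhdsGT_zero.const_mul_atTop_of_neg ha).congr
    fun _ => (div_eq_mul_inv _ _).symm

lemma tendsto_exp_div_atTop (a : ℝ) : Tendsto (fun T => exp (a / T)) atTop (𝓝 1) := by
  simpa [Function.comp_def] using
    (continuous_exp.tendsto 0).comp (tendsto_const_nhds.div_atTop tendsto_id)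

section ShiftedPartition

variable {ι : Type*} [Fintype ι] (z : ι → ℝ) (m : ι)

noncomputable def shiftedPartition (T : ℝ) : ℝ :=
  ∑ j, exp ((z j - z m) / T)

lemma sum_exp_div_eq_mul_shiftedPartition (T : ℝ) :
    ∑ j, exp (z j / T) = exp (z m / T) * shiftedPartition z m T := by
  simp only [shiftedPartition, mul_sum, ← exp_add, sub_div, add_sub_cancel]

lemma exp_div_div_sum_exp_div_eq_inv (T : ℝ) :
    exp (z m / T) / ∑ j, exp (z j / T) = (shiftedPartition z m T)⁻¹ := by
  rw [sum_exp_div_eq_mul_shiftedPartition z m, div_mul_eq_div_div, div_self (exp_ne_zero _),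
    one_div]

lemma continuousOn_shiftedPartition : ContinuousOn (shiftedPartition z m) (Set.Ioi 0) :=
  continuousOn_finsetSum _ fun _ _ =>
    continuous_exp.comp_continuousOn <| continuousOn_const.div continuousOn_id fun _ hT => hT.ne'

lemma tendsto_shiftedPartition_atTop :
    Tendsto (shiftedPartition z m) atTop (𝓝 (Fintype.card ι)) := by
  unfold shiftedPartition
  simpa using tendsto_finsetSum univ fun j _ => tendsto_exp_div_atTop (z j - z m)

variable {z m} (hz : ∀ j ≠ m, z j < z m)
include hz

lemma strictMonoOn_shiftedPartition [Nontrivial ι] :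
    StrictMonoOn (shiftedPartition z m) (Set.Ioi 0) := by
  intro s hs t ht hst
  obtain ⟨j, hj⟩ := exists_ne m
  refine sum_lt_sum (fun i _ => ?_) ⟨j, mem_univ j, ?_⟩
  · refine monotoneOn_exp_div_of_nonpos ?_ hs ht hst.le
    rcases eq_or_ne i m with rfl | hi
    · exact (sub_self _).le
    · exact (sub_neg.2 (hz i hi)).le
  · exact strictMonoOn_exp_div_of_neg (sub_neg.2 (hz j hj)) hs ht hst

lemma tendsto_shiftedPartition_nhdsGT_zero :
    Tendsto (shiftedPartition z m) (𝓝[>] 0) (𝓝 1) := by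
  classical
  have hterm (j : ι) :
      Tendsto (fun T => exp ((z j - z m) / T)) (𝓝[>] 0) (𝓝 (if j = m then 1 else 0)) := by
    rcases eq_or_ne j m with rfl | hj
    · simp
    · simpa [hj] using tendsto_exp_div_nhdsGT_zero_of_neg (sub_neg.2 (hz j hj))
  unfold shiftedPartition
  simpa using tendsto_finsetSum univ fun j _ => hterm j

lemma existsUnique_shiftedPartition_eq [Nontrivial ι] {y : ℝ}
    (hy : y ∈ Set.Ioo 1 (Fintype.card ι : ℝ)) :
    ∃! T, 0 < T ∧ shiftedPartition z m T = y := by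
  obtain ⟨T, hT, rfl⟩ := isPreconnected_Ioi.intermediate_value_Ioo (l₁ := 𝓝[>] 0) inf_le_right
    (le_principal_iff.2 (Ioi_mem_atTop 0)) (continuousOn_shiftedPartition z m)
    (tendsto_shiftedPartition_nhdsGT_zero hz) (tendsto_shiftedPartition_atTop z m) hy
  exact ⟨T, ⟨hT, rfl⟩, fun T' ⟨hT', hT'T⟩ =>
    (strictMonoOn_shiftedPartition hz).injOn hT' hT hT'T⟩

end ShiftedPartition

/-- For a logit vector with strict maximum at `M` and any target
`p̂ ∈ (1/K, 1)`, there is a unique positive temperature solving the confidence equation. -/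
theorem exists_unique_calibrating_temperature
    (K : ℕ) (hK : 2 ≤ K) (z : Fin K → ℝ) (M : Fin K)
    (hstrict : ∀ j ≠ M, z j < z M)
    (p : ℝ) (hp : p ∈ Set.Ioo (1 / (K : ℝ)) 1) :
    ∃! T : ℝ, 0 < T ∧ Real.exp (z M / T) / (∑ j, Real.exp (z j / T)) = p := by
  have : Nontrivial (Fin K) := Fin.nontrivial_iff_two_le.2 hK
  have hK₀ : (0 : ℝ) < K := by positivity
  obtain ⟨hp_lo, hp_hi⟩ := hp
  rw [one_div] at hp_lo
  have hp₀ : 0 < p := (inv_pos.2 hK₀).trans hp_lo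
  have hp_inv : p⁻¹ ∈ Set.Ioo 1 (Fintype.card (Fin K) : ℝ) := by
    rw [Fintype.card_fin]
    exact ⟨(one_lt_inv₀ hp₀).2 hp_hi, (inv_lt_comm₀ hp₀ hK₀).2 hp_lo⟩
  simpa only [exp_div_div_sum_exp_div_eq_inv, inv_eq_iff_eq_inv] using
    existsUnique_shiftedPartition_eq hstrict hp_inv
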